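/- arXiv:2107.04884 — 2 statements merged into one kernel-verified Lean document; each statement's English description precedes it below -/
import Mathlib

section
/- Let n ≥ 5. For the Riesz kernels on ℝⁿ, the semigroup (composition) identity holds: ∫_{ℝⁿ} |x−z|^{2−n} |z−y|^{2−n} dz = (π^{n/2} Γ(n/2 − 2) / Γ(n/2 − 1)²) · |x−y|^{4−n} for all x ≠ y in ℝⁿ. -/
/-!
Subordinate both Riesz kernels to the heat kernel: with `p = d/2 - 1`,
`Γ(p) ‖u‖^(-2p) = ∫₀^∞ t^(p-1) e^(-t‖u‖²) dt`. By Tonelli the `z`-integral of the product of the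
two Gaussians `e^(-a‖w-z‖²) e^(-b‖z‖²)` can be done first; completing the square it equals
`(π/(a+b))^(d/2) e^(-ab‖w‖²/(a+b))`. Substituting `b = a s`, the `a`-integral is a Gamma integral
equal to `π^(d/2) Γ(d/2-2) ‖w‖^(4-d) (1+s)^(-2)`, and `∫₀^∞ (1+s)^(-2) ds = 1`.
Everything is computed with lower Lebesgue integrals, so Tonelli needs no integrability.
-/

open MeasureTheory Real Set Module
open scoped ENNReal

lemma lintegral_rpow_mul_exp_neg_mul_Ioi {a r : ℝ} (ha : 0 < a) (hr : 0 < r) :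
    ∫⁻ t in Ioi (0 : ℝ), ENNReal.ofReal (t ^ (a - 1) * rexp (-(r * t)))
      = ENNReal.ofReal ((1 / r) ^ a * Gamma a) := by
  rw [← integral_rpow_mul_exp_neg_mul_Ioi ha hr, ofReal_integral_eq_lintegral_ofReal]
  · have h := integrableOn_rpow_mul_exp_neg_mul_rpow (p := 1) (s := a - 1) (by linarith) one_pos hr
    simp only [rpow_one, neg_mul] at h
    exact h
  · filter_upwards [self_mem_ae_restrict measurableSet_Ioi] with t (ht : 0 < t)
    positivity

lemma lintegral_rpow_mul_exp_neg_mul_sq_Ioi {p r : ℝ} (hp : 0 < p) (hr : 0 < r) :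
    ∫⁻ t in Ioi (0 : ℝ), ENNReal.ofReal (t ^ (p - 1) * rexp (-(t * r ^ 2)))
      = ENNReal.ofReal (Gamma p * r ^ (-(2 * p))) := by
  have h := lintegral_rpow_mul_exp_neg_mul_Ioi hp (pow_pos hr 2)
  simp_rw [mul_comm (r ^ 2)] at h
  rw [h, one_div, ← rpow_natCast, ← rpow_neg hr.le, ← rpow_mul hr.le, mul_comm]
  norm_num

lemma ofReal_mul_lintegral_Ioi_comp_mul_left {a : ℝ} (ha : 0 < a) (f : ℝ → ℝ≥0∞) :
    ENNReal.ofReal a * ∫⁻ s in Ioi 0, f (a * s) = ∫⁻ b in Ioi 0, f b := by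
  have hpre : (a * ·) ⁻¹' Ioi 0 = Ioi (0 : ℝ) := by
    ext s; simp [mul_pos_iff_of_pos_left ha]
  have hmap : Measure.map (a * ·) (volume.restrict (Ioi 0))
      = ENNReal.ofReal a⁻¹ • volume.restrict (Ioi (0 : ℝ)) := by
    conv_lhs => rw [← hpre]
    rw [← Measure.restrict_map (measurable_const_mul a) measurableSet_Ioi,
      Real.map_volume_mul_left ha.ne', abs_of_pos (inv_pos.mpr ha), Measure.restrict_smul]
  calc ENNReal.ofReal a * ∫⁻ s in Ioi 0, f (a * s)
      = ENNReal.ofReal a * ∫⁻ b, f b ∂Measure.map (a * ·) (volume.restrict (Ioi 0)) :=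
        congrArg _ (lintegral_map_equiv f (MeasurableEquiv.mulLeft₀ a ha.ne')).symm
    _ = ∫⁻ b in Ioi 0, f b := by
        rw [hmap, lintegral_smul_measure, smul_eq_mul, ← mul_assoc,
          ← ENNReal.ofReal_mul ha.le, mul_inv_cancel₀ ha.ne', ENNReal.ofReal_one, one_mul]

lemma lintegral_one_add_rpow_neg_two_Ioi :
    ∫⁻ s in Ioi (0 : ℝ), ENNReal.ofReal ((1 + s) ^ (-2 : ℝ)) = 1 := by
  have hmap : Measure.map (1 + ·) (volume.restrict (Ioi 0)) = volume.restrict (Ioi (1 : ℝ)) := by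
    have hpre : (1 + ·) ⁻¹' Ioi 1 = Ioi (0 : ℝ) := by ext s; simp
    conv_lhs => rw [← hpre]
    rw [← Measure.restrict_map (measurable_const_add 1) measurableSet_Ioi,
      map_add_left_eq_self volume 1]
  have hshift : ∫⁻ s in Ioi (0 : ℝ), ENNReal.ofReal ((1 + s) ^ (-2 : ℝ))
      = ∫⁻ t in Ioi (1 : ℝ), ENNReal.ofReal (t ^ (-2 : ℝ)) := by
    rw [← hmap]
    exact (lintegral_map_equiv (fun t => ENNReal.ofReal (t ^ (-2 : ℝ)))
      (MeasurableEquiv.addLeft (1 : ℝ))).symm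
  rw [hshift, ← ofReal_integral_eq_lintegral_ofReal
      (integrableOn_Ioi_rpow_of_lt (by norm_num) one_pos),
    integral_Ioi_rpow_of_lt (by norm_num) one_pos]
  · norm_num
  · filter_upwards [self_mem_ae_restrict measurableSet_Ioi] with t (ht : 1 < t)
    positivity

lemma lintegral_Ioi_lintegral_Ioi_rpow_mul_exp {m r : ℝ} (hm : 2 < m) (hr : 0 < r) :
    ∫⁻ a in Ioi (0 : ℝ), ∫⁻ b in Ioi (0 : ℝ),
      ENNReal.ofReal (a ^ (m - 2) * b ^ (m - 2)
        * ((π / (a + b)) ^ m * rexp (-(a * b / (a + b) * r ^ 2))))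
      = ENNReal.ofReal (π ^ m * Gamma (m - 2) * r ^ (-(2 * (m - 2)))) := by
  have hsubst : ∀ a ∈ Ioi (0 : ℝ), ∫⁻ b in Ioi (0 : ℝ),
      ENNReal.ofReal (a ^ (m - 2) * b ^ (m - 2)
        * ((π / (a + b)) ^ m * rexp (-(a * b / (a + b) * r ^ 2))))
      = ∫⁻ s in Ioi (0 : ℝ), ENNReal.ofReal (a ^ (m - 2 - 1) * rexp (-(s * r ^ 2 / (1 + s) * a)))
          * ENNReal.ofReal (s ^ (m - 2) * (π / (1 + s)) ^ m) := by
    intro a (ha : 0 < a)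
    rw [← ofReal_mul_lintegral_Ioi_comp_mul_left ha,
      ← lintegral_const_mul' _ _ ENNReal.ofReal_ne_top]
    refine setLIntegral_congr_fun measurableSet_Ioi fun s (hs : 0 < s) => ?_
    rw [← ENNReal.ofReal_mul ha.le, ← ENNReal.ofReal_mul (by positivity)]
    congr 1
    have hpow : a ^ (m - 2 - 1) * a ^ m = a * a ^ (m - 2) * a ^ (m - 2) := by
      rw [← rpow_add ha, mul_comm a, ← rpow_add_one ha.ne', ← rpow_add ha]
      congr 1; ring
    have hdiv : π / (a + a * s) = (π / (1 + s)) / a := by field_simp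
    have hexp : a * (a * s) / (a + a * s) * r ^ 2 = s * r ^ 2 / (1 + s) * a := by field_simp
    rw [hdiv, div_rpow (by positivity) ha.le, mul_rpow ha.le hs.le, hexp,
      eq_div_of_mul_eq (by positivity) hpow]
    field_simp
  have hgamma : ∀ s ∈ Ioi (0 : ℝ), ∫⁻ a in Ioi (0 : ℝ),
      ENNReal.ofReal (a ^ (m - 2 - 1) * rexp (-(s * r ^ 2 / (1 + s) * a)))
          * ENNReal.ofReal (s ^ (m - 2) * (π / (1 + s)) ^ m)
      = ENNReal.ofReal (π ^ m * Gamma (m - 2) * r ^ (-(2 * (m - 2))))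
          * ENNReal.ofReal ((1 + s) ^ (-2 : ℝ)) := by
    intro s (hs : 0 < s)
    rw [lintegral_mul_const' _ _ ENNReal.ofReal_ne_top,
      lintegral_rpow_mul_exp_neg_mul_Ioi (by linarith) (by positivity),
      ← ENNReal.ofReal_mul (by positivity), ← ENNReal.ofReal_mul (by positivity)]
    congr 1
    have h1s : 0 < 1 + s := by positivity
    rw [one_div_div, div_rpow h1s.le (by positivity), mul_rpow hs.le (by positivity),
      div_rpow pi_pos.le h1s.le, rpow_neg hr.le, rpow_mul hr.le, rpow_two,
      show (-2 : ℝ) = (m - 2) - m by ring, rpow_sub h1s (m - 2) m]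
    field_simp
  rw [setLIntegral_congr_fun measurableSet_Ioi hsubst, lintegral_lintegral_swap (by fun_prop),
    setLIntegral_congr_fun measurableSet_Ioi hgamma, lintegral_const_mul' _ _ ENNReal.ofReal_ne_top,
    lintegral_one_add_rpow_neg_two_Ioi, mul_one]

lemma lintegral_prod_Ioi_rpow_mul_exp_neg_mul_sq {p r₁ r₂ : ℝ} (hp : 0 < p) (hr₁ : 0 < r₁)
    (hr₂ : 0 < r₂) :
    ∫⁻ ab, ENNReal.ofReal (ab.1 ^ (p - 1) * rexp (-(ab.1 * r₁ ^ 2)))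
        * ENNReal.ofReal (ab.2 ^ (p - 1) * rexp (-(ab.2 * r₂ ^ 2)))
        ∂(volume.restrict (Ioi (0 : ℝ))).prod (volume.restrict (Ioi (0 : ℝ)))
      = ENNReal.ofReal (Gamma p ^ 2 * (r₁ ^ (-(2 * p)) * r₂ ^ (-(2 * p)))) := by
  rw [lintegral_prod_mul (f := fun a => ENNReal.ofReal (a ^ (p - 1) * rexp (-(a * r₁ ^ 2))))
      (g := fun b => ENNReal.ofReal (b ^ (p - 1) * rexp (-(b * r₂ ^ 2)))) (by fun_prop)
      (by fun_prop),
    lintegral_rpow_mul_exp_neg_mul_sq_Ioi hp hr₁, lintegral_rpow_mul_exp_neg_mul_sq_Ioi hp hr₂,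
    ← ENNReal.ofReal_mul (by positivity)]
  ring_nf

section InnerProductSpace

variable {V : Type*} [NormedAddCommGroup V] [InnerProductSpace ℝ V]

lemma mul_norm_sub_sq_add_mul_norm_sq {a b : ℝ} (hab : a + b ≠ 0) (w z : V) :
    a * ‖w - z‖ ^ 2 + b * ‖z‖ ^ 2
      = (a + b) * ‖z - (a / (a + b)) • w‖ ^ 2 + a * b / (a + b) * ‖w‖ ^ 2 := by
  rw [norm_sub_sq_real, norm_sub_sq_real, real_inner_smul_right, norm_smul, mul_pow,
    norm_eq_abs, sq_abs, real_inner_comm]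
  field_simp
  ring

variable [FiniteDimensional ℝ V] [MeasurableSpace V] [BorelSpace V]

lemma lintegral_exp_neg_mul_sq_norm {b : ℝ} (hb : 0 < b) :
    ∫⁻ v : V, ENNReal.ofReal (rexp (-b * ‖v‖ ^ 2))
      = ENNReal.ofReal ((π / b) ^ ((finrank ℝ V : ℝ) / 2)) := by
  have h := GaussianFourier.integral_rexp_neg_mul_sq_norm (V := V) hb
  rw [← h, ofReal_integral_eq_lintegral_ofReal _ (ae_of_all _ fun v => (exp_pos _).le)]
  exact Integrable.of_integral_ne_zero (by rw [h]; positivity)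

lemma lintegral_exp_neg_mul_norm_sub_sq_add_mul_norm_sq {a b : ℝ} (ha : 0 < a) (hb : 0 < b)
    (w : V) :
    ∫⁻ z : V, ENNReal.ofReal (rexp (-(a * ‖w - z‖ ^ 2 + b * ‖z‖ ^ 2)))
      = ENNReal.ofReal ((π / (a + b)) ^ ((finrank ℝ V : ℝ) / 2)
          * rexp (-(a * b / (a + b) * ‖w‖ ^ 2))) := by
  have hab : 0 < a + b := by positivity
  have hsplit : ∀ z : V, ENNReal.ofReal (rexp (-(a * ‖w - z‖ ^ 2 + b * ‖z‖ ^ 2)))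
      = ENNReal.ofReal (rexp (-(a + b) * ‖z - (a / (a + b)) • w‖ ^ 2))
        * ENNReal.ofReal (rexp (-(a * b / (a + b) * ‖w‖ ^ 2))) := fun z => by
    rw [← ENNReal.ofReal_mul (exp_pos _).le, ← exp_add,
      mul_norm_sub_sq_add_mul_norm_sq hab.ne']
    ring_nf
  simp_rw [hsplit]
  rw [lintegral_mul_const' _ _ ENNReal.ofReal_ne_top,
    lintegral_sub_right_eq_self (fun z => ENNReal.ofReal (rexp (-(a + b) * ‖z‖ ^ 2))),
    lintegral_exp_neg_mul_sq_norm hab, ← ENNReal.ofReal_mul (by positivity)]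

lemma ofReal_gamma_sq_mul_lintegral_rpow_norm_sub_mul_rpow_norm (hd : 4 < finrank ℝ V) {w : V}
    (hw : w ≠ 0) :
    ENNReal.ofReal (Gamma ((finrank ℝ V : ℝ) / 2 - 1) ^ 2) * ∫⁻ z : V,
        ENNReal.ofReal (‖w - z‖ ^ (2 - (finrank ℝ V : ℝ)) * ‖z‖ ^ (2 - (finrank ℝ V : ℝ)))
      = ENNReal.ofReal (π ^ ((finrank ℝ V : ℝ) / 2) * Gamma ((finrank ℝ V : ℝ) / 2 - 2)
          * ‖w‖ ^ (4 - (finrank ℝ V : ℝ))) := by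
  have : Nontrivial V := Module.nontrivial_of_finrank_pos (lt_trans (by norm_num) hd)
  have hd' : (4 : ℝ) < finrank ℝ V := by exact_mod_cast hd
  set m : ℝ := (finrank ℝ V : ℝ) / 2 with hm_def
  have hm : 2 < m := by linarith
  rw [show (2 : ℝ) - finrank ℝ V = -(2 * (m - 1)) by linarith,
    show (4 : ℝ) - finrank ℝ V = -(2 * (m - 2)) by linarith]
  set ν := volume.restrict (Ioi (0 : ℝ))
  set G : ℝ × ℝ → V → ℝ≥0∞ := fun ab z =>
    ENNReal.ofReal (ab.1 ^ (m - 2) * rexp (-(ab.1 * ‖w - z‖ ^ 2)))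
      * ENNReal.ofReal (ab.2 ^ (m - 2) * rexp (-(ab.2 * ‖z‖ ^ 2))) with hG
  have hheat : ∀ᵐ z : V, ENNReal.ofReal (Gamma (m - 1) ^ 2)
      * ENNReal.ofReal (‖w - z‖ ^ (-(2 * (m - 1))) * ‖z‖ ^ (-(2 * (m - 1))))
      = ∫⁻ ab, G ab z ∂ν.prod ν := by
    -- at `z = 0` or `z = w` the identity fails: the heat integral is `∞`, but `0 ^ (-2p) = 0`
    filter_upwards [volume.ae_ne 0, volume.ae_ne w] with z hz hzw
    have h := lintegral_prod_Ioi_rpow_mul_exp_neg_mul_sq (p := m - 1) (by linarith)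
      (norm_pos_iff.mpr (sub_ne_zero.mpr hzw.symm)) (norm_pos_iff.mpr hz)
    rw [show m - 1 - 1 = m - 2 by ring] at h
    rw [h, ← ENNReal.ofReal_mul (by positivity)]
  have hgauss : ∀ a ∈ Ioi (0 : ℝ), ∀ b ∈ Ioi (0 : ℝ), ∫⁻ z, G (a, b) z
      = ENNReal.ofReal (a ^ (m - 2) * b ^ (m - 2)
          * ((π / (a + b)) ^ m * rexp (-(a * b / (a + b) * ‖w‖ ^ 2)))) := by
    intro a (ha : 0 < a) b (hb : 0 < b)
    have hsplit : ∀ z, G (a, b) z = ENNReal.ofReal (a ^ (m - 2) * b ^ (m - 2))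
        * ENNReal.ofReal (rexp (-(a * ‖w - z‖ ^ 2 + b * ‖z‖ ^ 2))) := fun z => by
      simp only [hG]
      rw [← ENNReal.ofReal_mul (by positivity), ← ENNReal.ofReal_mul (by positivity),
        neg_add, exp_add]
      ring_nf
    simp_rw [hsplit]
    rw [lintegral_const_mul' _ _ ENNReal.ofReal_ne_top,
      lintegral_exp_neg_mul_norm_sub_sq_add_mul_norm_sq ha hb, ← ENNReal.ofReal_mul (by positivity)]
  calc _ = ∫⁻ z, ∫⁻ ab, G ab z ∂ν.prod ν := by
        rw [← lintegral_const_mul' _ _ ENNReal.ofReal_ne_top]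
        exact lintegral_congr_ae hheat
    _ = ∫⁻ ab, (∫⁻ z, G ab z) ∂ν.prod ν := lintegral_lintegral_swap (by simp only [hG]; fun_prop)
    _ = ∫⁻ a in Ioi 0, ∫⁻ b in Ioi 0, ∫⁻ z, G (a, b) z :=
        lintegral_prod _ (by simp only [hG]; fun_prop)
    _ = _ := by
        rw [setLIntegral_congr_fun measurableSet_Ioi fun a ha =>
          setLIntegral_congr_fun measurableSet_Ioi (hgauss a ha)]
        exact lintegral_Ioi_lintegral_Ioi_rpow_mul_exp hm (norm_pos_iff.mpr hw)

theorem lintegral_rpow_norm_sub_mul_rpow_norm (hd : 4 < finrank ℝ V) {w : V} (hw : w ≠ 0) :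
    ∫⁻ z : V, ENNReal.ofReal (‖w - z‖ ^ (2 - (finrank ℝ V : ℝ)) * ‖z‖ ^ (2 - (finrank ℝ V : ℝ)))
      = ENNReal.ofReal (π ^ ((finrank ℝ V : ℝ) / 2) * Gamma ((finrank ℝ V : ℝ) / 2 - 2)
          / Gamma ((finrank ℝ V : ℝ) / 2 - 1) ^ 2 * ‖w‖ ^ (4 - (finrank ℝ V : ℝ))) := by
  have hd' : (4 : ℝ) < finrank ℝ V := by exact_mod_cast hd
  have hΓ : 0 < Gamma ((finrank ℝ V : ℝ) / 2 - 1) := Gamma_pos_of_pos (by linarith)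
  have hΓ2 : ENNReal.ofReal (Gamma ((finrank ℝ V : ℝ) / 2 - 1) ^ 2) ≠ 0 :=
    (ENNReal.ofReal_pos.mpr (by positivity)).ne'
  rw [← ENNReal.mul_right_inj hΓ2 ENNReal.ofReal_ne_top,
    ofReal_gamma_sq_mul_lintegral_rpow_norm_sub_mul_rpow_norm hd hw,
    ← ENNReal.ofReal_mul (by positivity)]
  congr 1
  generalize Gamma ((finrank ℝ V : ℝ) / 2 - 1) = g at hΓ ⊢
  field_simp

theorem integral_rpow_norm_sub_mul_rpow_norm_sub (hd : 4 < finrank ℝ V) {x y : V} (hxy : x ≠ y) :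
    ∫ z, ‖x - z‖ ^ (2 - (finrank ℝ V : ℝ)) * ‖z - y‖ ^ (2 - (finrank ℝ V : ℝ))
      = π ^ ((finrank ℝ V : ℝ) / 2) * Gamma ((finrank ℝ V : ℝ) / 2 - 2)
          / Gamma ((finrank ℝ V : ℝ) / 2 - 1) ^ 2 * ‖x - y‖ ^ (4 - (finrank ℝ V : ℝ)) := by
  have hd' : (4 : ℝ) < finrank ℝ V := by exact_mod_cast hd
  have hΓ : 0 < Gamma ((finrank ℝ V : ℝ) / 2 - 2) := Gamma_pos_of_pos (by linarith)
  rw [integral_eq_lintegral_of_nonneg_ae (ae_of_all _ fun z => by positivity) (by fun_prop),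
    ← lintegral_add_right_eq_self _ y]
  simp only [add_sub_cancel_right, sub_add_eq_sub_sub_swap]
  rw [lintegral_rpow_norm_sub_mul_rpow_norm hd (sub_ne_zero.mpr hxy),
    ENNReal.toReal_ofReal (by positivity)]

end InnerProductSpace

/-- the Riesz composition (semigroup) identity for the Riesz kernels on `ℝⁿ`,
`n ≥ 5`: `∫ |x−z|^{2−n}|z−y|^{2−n} dz = π^{n/2} Γ(n/2−2)/Γ(n/2−1)² · |x−y|^{4−n}`. -/
theorem riesz_composition {n : ℕ} (hn : 5 ≤ n)
    (x y : EuclideanSpace ℝ (Fin n)) (hxy : x ≠ y) :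
    ∫ z, ‖x - z‖ ^ ((2 : ℝ) - n) * ‖z - y‖ ^ ((2 : ℝ) - n) ∂volume
      = (π ^ ((n : ℝ) / 2) * Gamma ((n : ℝ) / 2 - 2) / (Gamma ((n : ℝ) / 2 - 1)) ^ 2)
        * ‖x - y‖ ^ ((4 : ℝ) - n) := by
  simpa using integral_rpow_norm_sub_mul_rpow_norm_sub
    (V := EuclideanSpace ℝ (Fin n)) (by rw [finrank_euclideanSpace_fin]; exact hn) hxy
end

section
/- Let n > 2m ≥ 2 and fix λ₀ ∈ ℝ with λ₀ < 0. Suppose u : ℝⁿ → ℝ is continuous, nonnegative and satisfies the integral equation u(x) = ∫_{ℝⁿ} u^p(y) |x−y|^{2m−n} (1+|y|²)^{−α} dy on ℝⁿ with p ≥ 1, α > 0, all integrals finite, and u not identically zero. If u(x) = u(x^{λ₀}) for all x in the half-space Σ_{λ₀} = {x₁ < λ₀} (where x^{λ₀} is the reflection about {x₁ = λ₀}), then a contradiction follows; i.e., u cannot be exactly symmetric about any plane {x₁ = λ₀} with λ₀ ≠ 0. -/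
/-!
Write `R` for the reflection in `{x₁ = λ₀}`, `e = 2m − n < 0` and `w(y) = (1 + |y|²)^{−α}`.
For `z` with `z₁ < λ₀`, the symmetry gives
`0 = u(Rz) − u(z) = ∫ u^p(y) w(y) (|Rz − y|^e − |z − y|^e) dy`.
Folding this integral onto the half-space `{y₁ < λ₀}` through the measure-preserving involution
`R`, and using `u ∘ R = u` there, turns the integrand into
`u^p(y) (|z − y|^e − |Rz − y|^e) (w(Ry) − w(y))`.
Both factors are positive for `y ≠ z`: `Ry` is farther from `z` than `y` is, and, because
`λ₀ < 0`, closer to the origin. Since `u` solves an equation with a positive kernel it is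
positive everywhere, so the folded integral is positive, a contradiction.
-/

open MeasureTheory

/-- Reflection of `x` about the hyperplane `{x_i = l}`. -/
noncomputable def reflectPlane {n : ℕ} (i : Fin n) (l : ℝ)
    (x : EuclideanSpace ℝ (Fin n)) : EuclideanSpace ℝ (Fin n) :=
  x + (2 * (l - x i)) • EuclideanSpace.single i (1 : ℝ)

theorem integral_eq_setIntegral_add_comp {α E : Type*} [MeasurableSpace α]
    [NormedAddCommGroup E] [NormedSpace ℝ E] {μ : Measure α} {R : α → α}
    (hR : MeasurePreserving R μ μ) (hRinv : Function.Involutive R) {A : Set α}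
    (hA : MeasurableSet A) (hRA : R ⁻¹' Aᶜ =ᵐ[μ] A) {f : α → E} (hf : Integrable f μ) :
    ∫ x, f x ∂μ = ∫ x in A, (f x + f (R x)) ∂μ := by
  have hemb : MeasurableEmbedding R :=
    (MeasurableEquiv.ofInvolutive R hRinv hR.measurable).measurableEmbedding
  have hfR : Integrable (fun x => f (R x)) μ := hR.integrable_comp_of_integrable hf
  rw [integral_add hf.integrableOn hfR.integrableOn, ← integral_add_compl hA hf,
    ← hR.setIntegral_preimage_emb hemb f Aᶜ, setIntegral_congr_set hRA]

theorem setIntegral_pos_of_ae_pos {α : Type*} [MeasurableSpace α] {μ : Measure α} {A : Set α}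
    {g : α → ℝ} (hA : μ A ≠ 0) (hg : IntegrableOn g A μ) (hpos : ∀ᵐ x ∂μ.restrict A, 0 < g x) :
    0 < ∫ x in A, g x ∂μ := by
  have hsupp : Function.support g =ᵐ[μ.restrict A] Set.univ :=
    Filter.eventuallyEq_univ.2 (hpos.mono fun _ hx => hx.ne')
  rw [integral_pos_iff_support_of_nonneg_ae (hpos.mono fun _ hx => hx.le) hg,
    measure_congr hsupp, Measure.restrict_apply_univ]
  exact pos_iff_ne_zero.2 hA

theorem pos_of_eq_integral {E : Type*} [TopologicalSpace E] [MeasurableSpace E] {μ : Measure E}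
    [μ.IsOpenPosMeasure] [NullSingletonClass μ] {u : E → ℝ} {k : E → E → ℝ} (hu : Continuous u)
    (hne : ∃ x, 0 < u x) (hk_nonneg : ∀ x y, 0 ≤ k x y)
    (hk_pos : ∀ x y, y ≠ x → 0 < u y → 0 < k x y)
    (hk : ∀ x, Integrable (k x) μ) (heq : ∀ x, u x = ∫ y, k x y ∂μ) (x : E) : 0 < u x := by
  rw [heq, integral_pos_iff_support_of_nonneg (hk_nonneg x) (hk x)]
  calc 0 < μ {y | 0 < u y} := (isOpen_lt continuous_const hu).measure_pos μ hne
    _ = μ ({y | 0 < u y} \ {x}) := (measure_sdiff_null (measure_singleton x)).symm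
    _ ≤ μ (Function.support (k x)) :=
      measure_mono fun y ⟨hy, hyx⟩ => (hk_pos x y hyx hy).ne'

theorem volume_setOf_apply_eq {ι : Type*} [Fintype ι] (i : ι) (c : ℝ) :
    volume {y : EuclideanSpace ℝ ι | y i = c} = 0 := by
  have hplane : MeasurableSet {g : ι → ℝ | g i = c} :=
    measurableSet_eq_fun (by fun_prop) (by fun_prop)
  have := (EuclideanSpace.volume_preserving_symm_measurableEquiv_toLp ι).measure_preimage
    hplane.nullMeasurableSet
  rw [volume_pi, Measure.pi_hyperplane] at this
  exact this

section

variable {n : ℕ} (i : Fin n) (l : ℝ)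

theorem reflectPlane_apply_self (x : EuclideanSpace ℝ (Fin n)) :
    reflectPlane i l x i = 2 * l - x i := by
  simp [reflectPlane]; ring

theorem reflectPlane_eq_reflection_add (x : EuclideanSpace ℝ (Fin n)) :
    reflectPlane i l x = (ℝ ∙ EuclideanSpace.single i (1 : ℝ))ᗮ.reflection x
      + (2 * l) • EuclideanSpace.single i 1 := by
  rw [Submodule.reflection_orthogonal_apply, Submodule.reflection_singleton_apply]
  simp [reflectPlane, EuclideanSpace.inner_single_left]
  module

theorem reflectPlane_involutive : Function.Involutive (reflectPlane i l) := by
  intro x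
  simp only [reflectPlane_eq_reflection_add, map_add, map_smul, Submodule.reflection_reflection,
    Submodule.reflection_orthogonalComplement_singleton_eq_neg]
  module

theorem measurePreserving_reflectPlane :
    MeasurePreserving (reflectPlane i l) (volume : Measure (EuclideanSpace ℝ (Fin n))) volume := by
  have : reflectPlane i l = (· + (2 * l) • EuclideanSpace.single i (1 : ℝ)) ∘
      (ℝ ∙ EuclideanSpace.single i (1 : ℝ))ᗮ.reflection :=
    funext (reflectPlane_eq_reflection_add i l)
  rw [this]
  exact (measurePreserving_add_right _ _).comp (LinearIsometryEquiv.measurePreserving _)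

theorem norm_reflectPlane_sub_reflectPlane (x y : EuclideanSpace ℝ (Fin n)) :
    ‖reflectPlane i l x - reflectPlane i l y‖ = ‖x - y‖ := by
  simp only [reflectPlane_eq_reflection_add, add_sub_add_right_eq_sub, ← map_sub,
    LinearIsometryEquiv.norm_map]

theorem norm_sub_reflectPlane_comm (x y : EuclideanSpace ℝ (Fin n)) :
    ‖x - reflectPlane i l y‖ = ‖reflectPlane i l x - y‖ := by
  rw [← norm_reflectPlane_sub_reflectPlane i l, reflectPlane_involutive]

theorem norm_sub_reflectPlane_sq (x y : EuclideanSpace ℝ (Fin n)) :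
    ‖x - reflectPlane i l y‖ ^ 2 = ‖x - y‖ ^ 2 + 4 * (l - x i) * (l - y i) := by
  have : x - reflectPlane i l y = (x - y) + (-2 * (l - y i)) • EuclideanSpace.single i 1 := by
    simp only [reflectPlane]; module
  rw [this, norm_add_sq_real, real_inner_smul_right, EuclideanSpace.inner_single_right, norm_smul]
  simp only [PiLp.sub_apply, conj_trivial, Real.norm_eq_abs, PiLp.norm_single, norm_one,
    mul_one, sq_abs, mul_pow]
  ring

theorem rpow_norm_reflectPlane_sub_lt {e : ℝ} (he : e < 0) {x y : EuclideanSpace ℝ (Fin n)}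
    (hx : x i < l) (hy : y i < l) (hxy : x ≠ y) :
    ‖reflectPlane i l x - y‖ ^ e < ‖x - y‖ ^ e := by
  refine Real.rpow_lt_rpow_of_neg (norm_pos_iff.2 (sub_ne_zero.2 hxy)) ?_ he
  rw [← norm_sub_reflectPlane_comm]
  refine lt_of_pow_lt_pow_left₀ 2 (norm_nonneg _) ?_
  rw [norm_sub_reflectPlane_sq]
  nlinarith

theorem norm_reflectPlane_lt {y : EuclideanSpace ℝ (Fin n)} (hl : l < 0) (hy : y i < l) :
    ‖reflectPlane i l y‖ < ‖y‖ := by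
  refine lt_of_pow_lt_pow_left₀ 2 (norm_nonneg _) ?_
  simpa [← norm_neg (reflectPlane i l y), ← norm_neg y, norm_sub_reflectPlane_sq,
    ← zero_sub] using (show 4 * l * (l - y i) < 0 by nlinarith)

theorem rpow_one_add_norm_sq_lt_reflectPlane {α : ℝ} (hα : 0 < α) (hl : l < 0)
    {y : EuclideanSpace ℝ (Fin n)} (hy : y i < l) :
    (1 + ‖y‖ ^ 2) ^ (-α) < (1 + ‖reflectPlane i l y‖ ^ 2) ^ (-α) := by
  refine Real.rpow_lt_rpow_of_neg (by positivity) ?_ (neg_lt_zero.2 hα)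
  have := norm_reflectPlane_lt i l hl hy
  gcongr

theorem reflectPlane_preimage_compl_ae_eq :
    reflectPlane i l ⁻¹' {y | y i < l}ᶜ =ᵐ[volume] {y | y i < l} := by
  have hpre : reflectPlane i l ⁻¹' {y | y i < l}ᶜ = {y | y i ≤ l} := by
    ext y
    simp only [Set.mem_preimage, Set.mem_compl_iff, Set.mem_ofPred_eq, not_lt,
      reflectPlane_apply_self]
    constructor <;> intro h <;> linarith
  rw [hpre, ← measure_symmDiff_eq_zero_iff]
  refine measure_mono_null (fun y hy => ?_) (volume_setOf_apply_eq i l)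
  simp only [Set.mem_symmDiff, Set.mem_ofPred_eq, not_lt, not_le] at hy ⊢
  rcases hy with ⟨hle, hge⟩ | ⟨hlt, hgt⟩ <;> linarith

theorem integral_pos_of_add_comp_reflectPlane_pos {f : EuclideanSpace ℝ (Fin n) → ℝ}
    (hf : Integrable f) (hpos : ∀ᵐ y, y i < l → 0 < f y + f (reflectPlane i l y)) :
    0 < ∫ y, f y := by
  have hA : IsOpen {y : EuclideanSpace ℝ (Fin n) | y i < l} :=
    isOpen_lt (by fun_prop) continuous_const
  rw [integral_eq_setIntegral_add_comp (measurePreserving_reflectPlane i l)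
    (reflectPlane_involutive i l) hA.measurableSet (reflectPlane_preimage_compl_ae_eq i l) hf]
  exact setIntegral_pos_of_ae_pos
    (hA.measure_pos volume ⟨(l - 1) • EuclideanSpace.single i 1, by simp⟩).ne'
    (hf.add ((measurePreserving_reflectPlane i l).integrable_comp_of_integrable hf)).integrableOn
    ((ae_restrict_iff' hA.measurableSet).2 hpos)

end

/-- a nontrivial nonnegative continuous solution of the integral equation
`u(x) = ∫ u^p(y)|x−y|^{2m−n}(1+|y|²)^{−α} dy` cannot be exactly symmetric about a plane
`{x₁ = λ₀}` with `λ₀ < 0`: assuming `u(x) = u(x^{λ₀})` for all `x` in `Σ_{λ₀} = {x₁ < λ₀}`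
leads to a contradiction. -/
theorem no_symmetry_about_negative_plane {n m : ℕ} (hnm : 2 * m < n)
    (l₀ : ℝ) (hl₀ : l₀ < 0)
    (p α : ℝ) (hα : 0 < α)
    (u : EuclideanSpace ℝ (Fin n) → ℝ) (hcont : Continuous u) (hpos : ∀ x, 0 ≤ u x)
    (hInt : ∀ x, Integrable
      (fun y => u y ^ p * ‖x - y‖ ^ (2 * (m : ℝ) - n) * (1 + ‖y‖ ^ 2) ^ (-α)) volume)
    (heq : ∀ x, u x =
      ∫ y, u y ^ p * ‖x - y‖ ^ (2 * (m : ℝ) - n) * (1 + ‖y‖ ^ 2) ^ (-α) ∂volume)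
    (hne : ∃ x, u x ≠ 0)
    (hsym : ∀ x : EuclideanSpace ℝ (Fin n), x ⟨0, by omega⟩ < l₀ →
      u x = u (reflectPlane ⟨0, by omega⟩ l₀ x)) :
    False := by
  have : NeZero n := ⟨by omega⟩
  set i : Fin n := ⟨0, by omega⟩
  set e : ℝ := 2 * (m : ℝ) - n
  have he : e < 0 := by
    have := (Nat.cast_lt (α := ℝ)).2 hnm
    push_cast at this
    linarith
  set k := fun x y => u y ^ p * ‖x - y‖ ^ e * (1 + ‖y‖ ^ 2) ^ (-α)
  have hu : ∀ y, 0 < u y := by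
    obtain ⟨x₀, hx₀⟩ := hne
    refine pos_of_eq_integral hcont ⟨x₀, (hpos x₀).lt_of_ne' hx₀⟩ (fun x y => ?_)
      (fun x y hyx hy => ?_) hInt heq
    · have := hpos y
      positivity
    · have : 0 < ‖x - y‖ := norm_pos_iff.2 (sub_ne_zero.2 hyx.symm)
      positivity
  set z : EuclideanSpace ℝ (Fin n) := (l₀ - 1) • EuclideanSpace.single i 1
  have hz : z i < l₀ := by simp [z]
  have hfold := integral_pos_of_add_comp_reflectPlane_pos i l₀
    (f := fun y => k (reflectPlane i l₀ z) y - k z y) ((hInt _).sub (hInt _)) ?_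
  · rw [integral_sub (hInt _) (hInt _), ← heq, ← heq, hsym z hz, sub_self] at hfold
    exact hfold.false
  filter_upwards [Measure.ae_ne volume z] with y hyz hy
  have hsum : k (reflectPlane i l₀ z) y - k z y
      + (k (reflectPlane i l₀ z) (reflectPlane i l₀ y) - k z (reflectPlane i l₀ y))
      = u y ^ p * (‖z - y‖ ^ e - ‖reflectPlane i l₀ z - y‖ ^ e)
        * ((1 + ‖reflectPlane i l₀ y‖ ^ 2) ^ (-α) - (1 + ‖y‖ ^ 2) ^ (-α)) := by
    simp only [k, norm_sub_reflectPlane_comm, reflectPlane_involutive i l₀ z, ← hsym y hy]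
    ring
  rw [hsum]
  exact mul_pos (mul_pos (Real.rpow_pos_of_pos (hu y) p)
    (sub_pos.2 (rpow_norm_reflectPlane_sub_lt i l₀ he hz hy hyz.symm)))
    (sub_pos.2 (rpow_one_add_norm_sq_lt_reflectPlane i l₀ hα hl₀ hy))
end
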